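/- arXiv:2002.01433 — 3 statements merged into one kernel-verified Lean document; each statement's English description precedes it below -/
import Mathlib

section
/- If H^n = W ⋊ V is a semidirect product of a vertical subgroup W and a horizontal subgroup V, then there exists a constant c_0 ∈ (0,1) such that for all w ∈ W and v ∈ V: c_0(∥w∥ + ∥v∥) ≤ ∥wv∥ ≤ ∥w∥ + ∥v∥, where ∥·∥ is a fixed homogeneous norm. -/
noncomputable section

open Filter Set
open scoped BigOperators Topology ENNReal

/-- The Heisenberg group product on `ℝ^{2n+1}` in symplectic coordinates. -/
def hmul (n : ℕ) (x y : Fin (2*n+1) → ℝ) : Fin (2*n+1) → ℝ := fun j =>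
  x j + y j + (if (j : ℕ) = 2*n then
    (∑ i : Fin n, (x ⟨(i:ℕ), by omega⟩ * y ⟨(i:ℕ)+n, by omega⟩
      - x ⟨(i:ℕ)+n, by omega⟩ * y ⟨(i:ℕ), by omega⟩)) / 2
  else 0)

/-- Intrinsic dilations of the Heisenberg group. -/
def hdil (n : ℕ) (t : ℝ) (x : Fin (2*n+1) → ℝ) : Fin (2*n+1) → ℝ := fun j =>
  if (j : ℕ) = 2*n then t^2 * x j else t * x j

/-- The horizontal layer `H_1`. -/
def H1set (n : ℕ) : Set (Fin (2*n+1) → ℝ) := {x | x ⟨2*n, by omega⟩ = 0}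

/-- The vertical layer (center) `H_2`. -/
def H2set (n : ℕ) : Set (Fin (2*n+1) → ℝ) := {x | ∀ j : Fin (2*n+1), (j:ℕ) ≠ 2*n → x j = 0}

/-- A homogeneous distance on the Heisenberg group: a distance inducing the standard
topology, left invariant and 1-homogeneous under dilations. -/
structure IsHomDist (n : ℕ) (d : (Fin (2*n+1) → ℝ) → (Fin (2*n+1) → ℝ) → ℝ) : Prop where
  eq_zero_iff : ∀ x y, d x y = 0 ↔ x = y
  symm : ∀ x y, d x y = d y x
  triangle : ∀ x y z, d x z ≤ d x y + d y z
  continuous : Continuous fun p : (Fin (2*n+1) → ℝ) × (Fin (2*n+1) → ℝ) => d p.1 p.2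
  ball_mem_nhds : ∀ x : Fin (2*n+1) → ℝ, ∀ ε > (0:ℝ), {y | d x y < ε} ∈ nhds x
  leftInvariant : ∀ z x y, d (hmul n z x) (hmul n z y) = d x y
  homogeneous : ∀ t > (0:ℝ), ∀ x y, d (hdil n t x) (hdil n t y) = t * d x y

/-- A homogeneous subgroup: a closed subgroup invariant under all dilations. -/
structure IsHomSubgroup (n : ℕ) (S : Set (Fin (2*n+1) → ℝ)) : Prop where
  zero_mem : (0 : Fin (2*n+1) → ℝ) ∈ S
  mul_mem : ∀ x ∈ S, ∀ y ∈ S, hmul n x y ∈ S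
  neg_mem : ∀ x ∈ S, -x ∈ S
  dil_mem : ∀ t > (0:ℝ), ∀ x ∈ S, hdil n t x ∈ S
  closed : IsClosed S

/-- A vertical subgroup contains the center `H_2`. -/
def IsVertical (n : ℕ) (S : Set (Fin (2*n+1) → ℝ)) : Prop := IsHomSubgroup n S ∧ H2set n ⊆ S

/-- A horizontal subgroup is contained in `H_1`. -/
def IsHorizontal (n : ℕ) (S : Set (Fin (2*n+1) → ℝ)) : Prop := IsHomSubgroup n S ∧ S ⊆ H1set n

/-- `H^n = W ⋊ V`. -/
def IsSemidirect (n : ℕ) (W V : Set (Fin (2*n+1) → ℝ)) : Prop :=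
  (∀ x, ∃ w ∈ W, ∃ v ∈ V, x = hmul n w v) ∧ W ∩ V = {0}
lemma hdil_apply_eq (n : ℕ) (t : ℝ) (x : Fin (2*n+1) → ℝ) (j : Fin (2*n+1))
    (h : (j:ℕ) = 2*n) : hdil n t x j = t^2 * x j := if_pos h

lemma hdil_apply_ne (n : ℕ) (t : ℝ) (x : Fin (2*n+1) → ℝ) (j : Fin (2*n+1))
    (h : (j:ℕ) ≠ 2*n) : hdil n t x j = t * x j := if_neg h

lemma hmul_apply_eq (n : ℕ) (x y : Fin (2*n+1) → ℝ) (j : Fin (2*n+1))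
    (h : (j:ℕ) = 2*n) : hmul n x y j = x j + y j +
    (∑ i : Fin n, (x ⟨(i:ℕ), by omega⟩ * y ⟨(i:ℕ)+n, by omega⟩
      - x ⟨(i:ℕ)+n, by omega⟩ * y ⟨(i:ℕ), by omega⟩)) / 2 := by
  simp [hmul, h]

lemma hmul_apply_ne (n : ℕ) (x y : Fin (2*n+1) → ℝ) (j : Fin (2*n+1))
    (h : (j:ℕ) ≠ 2*n) : hmul n x y j = x j + y j := by
  simp [hmul, h]

lemma hmul_zero_right (n : ℕ) (x : Fin (2*n+1) → ℝ) : hmul n x 0 = x := by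
  funext j; simp [hmul]

lemma hmul_neg_right (n : ℕ) (x : Fin (2*n+1) → ℝ) : hmul n x (-x) = 0 := by
  funext j
  simp only [hmul, Pi.neg_apply, Pi.zero_apply]
  rw [Finset.sum_eq_zero fun i _ => by ring]
  split <;> ring

lemma hdil_zero (n : ℕ) (t : ℝ) : hdil n t 0 = 0 := by
  funext j; simp [hdil]

lemma hdil_one (n : ℕ) (x : Fin (2*n+1) → ℝ) : hdil n 1 x = x := by
  funext j; simp [hdil]

lemma hmul_left_cancel (n : ℕ) {w a b : Fin (2*n+1) → ℝ}
    (h : hmul n w a = hmul n w b) : a = b := by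
  have hj : ∀ j : Fin (2*n+1), (j:ℕ) ≠ 2*n → a j = b j := by
    intro j hjn
    have := congrFun h j
    simp only [hmul, if_neg hjn] at this
    linarith
  funext j
  by_cases hjn : (j:ℕ) = 2*n
  · have h2 := congrFun h j
    simp only [hmul, if_pos hjn] at h2
    have hS : (∑ i : Fin n, (w ⟨(i:ℕ), by omega⟩ * a ⟨(i:ℕ)+n, by omega⟩
        - w ⟨(i:ℕ)+n, by omega⟩ * a ⟨(i:ℕ), by omega⟩))
        = (∑ i : Fin n, (w ⟨(i:ℕ), by omega⟩ * b ⟨(i:ℕ)+n, by omega⟩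
        - w ⟨(i:ℕ)+n, by omega⟩ * b ⟨(i:ℕ), by omega⟩)) := by
      refine Finset.sum_congr rfl fun i _ => ?_
      have hi := i.isLt
      rw [hj ⟨(i:ℕ)+n, by omega⟩ (by show (i:ℕ)+n ≠ 2*n; omega),
        hj ⟨(i:ℕ), by omega⟩ (by show (i:ℕ) ≠ 2*n; omega)]
    rw [hS] at h2
    linarith
  · exact hj j hjn

lemma hdil_hmul (n : ℕ) (t : ℝ) (x y : Fin (2*n+1) → ℝ) :
    hdil n t (hmul n x y) = hmul n (hdil n t x) (hdil n t y) := by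
  funext j
  by_cases hj : (j:ℕ) = 2*n
  · have hS : (∑ i : Fin n, (hdil n t x ⟨(i:ℕ), by omega⟩ * hdil n t y ⟨(i:ℕ)+n, by omega⟩
        - hdil n t x ⟨(i:ℕ)+n, by omega⟩ * hdil n t y ⟨(i:ℕ), by omega⟩))
        = t^2 * (∑ i : Fin n, (x ⟨(i:ℕ), by omega⟩ * y ⟨(i:ℕ)+n, by omega⟩
        - x ⟨(i:ℕ)+n, by omega⟩ * y ⟨(i:ℕ), by omega⟩)) := by
      rw [Finset.mul_sum]
      refine Finset.sum_congr rfl fun i _ => ?_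
      have hi := i.isLt
      rw [hdil_apply_ne n t x ⟨(i:ℕ), by omega⟩ (by show ¬((i:ℕ) = 2*n); omega),
        hdil_apply_ne n t y ⟨(i:ℕ)+n, by omega⟩ (by show ¬((i:ℕ)+n = 2*n); omega),
        hdil_apply_ne n t x ⟨(i:ℕ)+n, by omega⟩ (by show ¬((i:ℕ)+n = 2*n); omega),
        hdil_apply_ne n t y ⟨(i:ℕ), by omega⟩ (by show ¬((i:ℕ) = 2*n); omega)]
      ring
    rw [hdil_apply_eq n t _ j hj, hmul_apply_eq n x y j hj,
      hmul_apply_eq n (hdil n t x) (hdil n t y) j hj, hS,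
      hdil_apply_eq n t x j hj, hdil_apply_eq n t y j hj]
    ring
  · rw [hdil_apply_ne n t _ j hj, hmul_apply_ne n x y j hj,
      hmul_apply_ne n (hdil n t x) (hdil n t y) j hj,
      hdil_apply_ne n t x j hj, hdil_apply_ne n t y j hj]
    ring
lemma norm_hdil_le (n : ℕ) {t : ℝ} (ht0 : 0 < t) (ht1 : t ≤ 1) (x : Fin (2*n+1) → ℝ) :
    ‖hdil n t x‖ ≤ t * ‖x‖ := by
  have ht2 : t^2 ≤ t := by nlinarith
  refine (pi_norm_le_iff_of_nonneg (by positivity)).2 fun j => ?_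
  have hxj : ‖x j‖ ≤ ‖x‖ := norm_le_pi_norm x j
  have hxj0 : (0:ℝ) ≤ ‖x j‖ := norm_nonneg _
  by_cases hj : (j:ℕ) = 2*n
  · rw [hdil_apply_eq n t x j hj, norm_mul, Real.norm_of_nonneg (sq_nonneg t)]
    nlinarith
  · rw [hdil_apply_ne n t x j hj, norm_mul, Real.norm_of_nonneg ht0.le]
    nlinarith

lemma le_norm_hdil (n : ℕ) {t : ℝ} (ht0 : 0 < t) (ht1 : t ≤ 1) (x : Fin (2*n+1) → ℝ) :
    t^2 * ‖x‖ ≤ ‖hdil n t x‖ := by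
  have ht2 : t^2 ≤ t := by nlinarith
  have key : ‖x‖ ≤ (t^2)⁻¹ * ‖hdil n t x‖ := by
    refine (pi_norm_le_iff_of_nonneg (by positivity)).2 fun j => ?_
    have h1 : ‖hdil n t x j‖ ≤ ‖hdil n t x‖ := norm_le_pi_norm _ j
    have h2 : t^2 * ‖x j‖ ≤ ‖hdil n t x j‖ := by
      by_cases hj : (j:ℕ) = 2*n
      · rw [hdil_apply_eq n t x j hj, norm_mul, Real.norm_of_nonneg (sq_nonneg t)]
      · rw [hdil_apply_ne n t x j hj, norm_mul, Real.norm_of_nonneg ht0.le]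
        nlinarith [norm_nonneg (x j)]
    calc ‖x j‖ = (t^2)⁻¹ * (t^2 * ‖x j‖) := by field_simp
      _ ≤ (t^2)⁻¹ * ‖hdil n t x‖ :=
        mul_le_mul_of_nonneg_left (h2.trans h1) (by positivity)
  calc t^2 * ‖x‖ ≤ t^2 * ((t^2)⁻¹ * ‖hdil n t x‖) :=
      mul_le_mul_of_nonneg_left key (by positivity)
    _ = ‖hdil n t x‖ := by field_simp

lemma hdil_cont (n : ℕ) (x : Fin (2*n+1) → ℝ) : Continuous fun t : ℝ => hdil n t x := by
  apply continuous_pi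
  intro j
  simp only [hdil]
  by_cases hj : (j:ℕ) = 2*n
  · simp only [if_pos hj]; fun_prop
  · simp only [if_neg hj]; fun_prop

lemma hmul_cont (n : ℕ) :
    Continuous fun q : (Fin (2*n+1) → ℝ) × (Fin (2*n+1) → ℝ) => hmul n q.1 q.2 := by
  apply continuous_pi
  intro j
  simp only [hmul]
  by_cases hj : (j:ℕ) = 2*n
  · simp only [if_pos hj]
    refine Continuous.add (Continuous.add ?_ ?_) (Continuous.div_const ?_ 2)
    · exact (continuous_apply j).comp continuous_fst
    · exact (continuous_apply j).comp continuous_snd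
    · refine continuous_finset_sum _ fun i _ => Continuous.sub (Continuous.mul ?_ ?_) (Continuous.mul ?_ ?_)
      · exact (continuous_apply _).comp continuous_fst
      · exact (continuous_apply _).comp continuous_snd
      · exact (continuous_apply _).comp continuous_fst
      · exact (continuous_apply _).comp continuous_snd
  · simp only [if_neg hj]
    exact Continuous.add (Continuous.add ((continuous_apply j).comp continuous_fst)
      ((continuous_apply j).comp continuous_snd)) continuous_const

/-- If `H^n = W ⋊ V` with `W` vertical and `V` horizontal, then there is `c₀ ∈ (0,1)` with
`c₀(∥w∥ + ∥v∥) ≤ ∥wv∥ ≤ ∥w∥ + ∥v∥` for all `w ∈ W`, `v ∈ V`, where `∥x∥ = d(x,0)` for a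
fixed homogeneous distance `d`. -/
theorem stmt_5 (n : ℕ) (d : (Fin (2*n+1) → ℝ) → (Fin (2*n+1) → ℝ) → ℝ)
    (hd : IsHomDist n d) (W V : Set (Fin (2*n+1) → ℝ))
    (hW : IsVertical n W) (hV : IsHorizontal n V) (hWV : IsSemidirect n W V) :
    ∃ c0 : ℝ, 0 < c0 ∧ c0 < 1 ∧ ∀ w ∈ W, ∀ v ∈ V,
      c0 * (d w 0 + d v 0) ≤ d (hmul n w v) 0 ∧ d (hmul n w v) 0 ≤ d w 0 + d v 0 := by
  classical
  -- basic facts about the homogeneous norm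
  have hd0 : ∀ x, d x x = 0 := fun x => (hd.eq_zero_iff x x).2 rfl
  have hNnonneg : ∀ x y, 0 ≤ d x y := by
    intro x y
    nlinarith [hd.triangle x y x, hd.symm x y, hd0 x]
  have hNcont : Continuous fun x => d x 0 :=
    hd.continuous.comp (continuous_id.prodMk continuous_const)
  have hNdil : ∀ t : ℝ, 0 < t → ∀ x, d (hdil n t x) 0 = t * d x 0 := by
    intro t ht x
    have := hd.homogeneous t ht x 0
    rwa [hdil_zero n t] at this
  -- upper bound
  have hupper : ∀ w v, d (hmul n w v) 0 ≤ d w 0 + d v 0 := by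
    intro w v
    have h1 : d (hmul n w v) w = d v 0 := by
      have := hd.leftInvariant w v 0
      rwa [hmul_zero_right] at this
    have h2 := hd.triangle (hmul n w v) w 0
    linarith
  -- minimum of the homogeneous norm on the Euclidean unit sphere
  obtain ⟨u, huS, humin⟩ := (isCompact_sphere (0 : Fin (2*n+1) → ℝ) 1).exists_isMinOn
    (NormedSpace.sphere_nonempty.2 zero_le_one) hNcont.continuousOn
  have hu1 : ‖u‖ = 1 := mem_sphere_zero_iff_norm.1 huS
  have hm : 0 < d u 0 := by
    rcases (hNnonneg u 0).lt_or_eq with h | h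
    · exact h
    · exfalso
      have : u = 0 := (hd.eq_zero_iff u 0).1 h.symm
      rw [this] at hu1; simp at hu1
  set m : ℝ := d u 0 with hmdef
  -- the unit sublevel set of the homogeneous norm is compact
  have hball : IsCompact {x : Fin (2*n+1) → ℝ | d x 0 ≤ 1} := by
    refine Metric.isCompact_of_isClosed_isBounded
      (isClosed_le hNcont continuous_const) ?_
    rw [isBounded_iff_forall_norm_le]
    refine ⟨max 1 (m⁻¹^2), fun x hx => ?_⟩
    by_cases hx1 : ‖x‖ ≤ 1
    · exact hx1.trans (le_max_left _ _)
    push_neg at hx1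
    have hxpos : (0:ℝ) < ‖x‖ := by linarith
    set a : ℝ := ‖x‖⁻¹ with hadef
    have ha : 0 < a := inv_pos.2 hxpos
    have ha1 : a ≤ 1 := by
      rw [hadef]
      exact inv_le_one_of_one_le₀ hx1.le
    have hIVT := intermediate_value_Icc ha1 ((hdil_cont n x).norm.continuousOn)
    have h1mem : (1:ℝ) ∈ Icc (‖hdil n a x‖) (‖hdil n 1 x‖) := by
      constructor
      · calc ‖hdil n a x‖ ≤ a * ‖x‖ := norm_hdil_le n ha ha1 x
          _ = 1 := inv_mul_cancel₀ hxpos.ne'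
      · rw [hdil_one]; exact hx1.le
    obtain ⟨t, htI, ht1⟩ := hIVT h1mem
    have ht0 : 0 < t := lt_of_lt_of_le ha htI.1
    have htle1 : t ≤ 1 := htI.2
    have hmem : hdil n t x ∈ Metric.sphere (0 : Fin (2*n+1) → ℝ) 1 :=
      mem_sphere_zero_iff_norm.2 ht1
    have h5 : m ≤ d (hdil n t x) 0 := isMinOn_iff.1 humin _ hmem
    have h6 : d (hdil n t x) 0 = t * d x 0 := hNdil t ht0 x
    have hx' : d x 0 ≤ 1 := hx
    have htm : m ≤ t := by nlinarith [hNnonneg x 0, mul_nonneg ht0.le (sub_nonneg.2 hx')]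
    have h7 : t^2 * ‖x‖ ≤ 1 := by rw [← ht1]; exact le_norm_hdil n ht0 htle1 x
    have h8 : ‖x‖ ≤ m⁻¹^2 := by
      have hmt : m^2 ≤ t^2 := by nlinarith
      rw [inv_pow, ← one_div, le_div_iff₀ (by positivity)]
      nlinarith [mul_le_mul_of_nonneg_left hmt hxpos.le]
    exact h8.trans (le_max_right _ _)
  -- the compact set of normalized pairs
  set K : Set ((Fin (2*n+1) → ℝ) × (Fin (2*n+1) → ℝ)) :=
    {p | p.1 ∈ W ∧ p.2 ∈ V ∧ d p.1 0 + d p.2 0 = 1} with hKdef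
  have hKclosed : IsClosed K := by
    rw [show K = (Prod.fst ⁻¹' W) ∩ ((Prod.snd ⁻¹' V) ∩
        {p : (Fin (2*n+1) → ℝ) × (Fin (2*n+1) → ℝ) | d p.1 0 + d p.2 0 = 1}) from by
      ext p; simp [hKdef]]
    exact (hW.1.closed.preimage continuous_fst).inter
      ((hV.1.closed.preimage continuous_snd).inter
        (isClosed_eq ((hNcont.comp continuous_fst).add (hNcont.comp continuous_snd))
          continuous_const))
  have hKcomp : IsCompact K := by
    refine (hball.prod hball).of_isClosed_subset hKclosed ?_
    rintro ⟨p1, p2⟩ ⟨-, -, hsum⟩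
    constructor
    · simp only [mem_setOf_eq]
      have := hNnonneg p2 0
      linarith
    · simp only [mem_setOf_eq]
      have := hNnonneg p1 0
      linarith
  -- a positive lower bound on K
  obtain ⟨c0, hc0, hc01, hc0K⟩ : ∃ c0 : ℝ, 0 < c0 ∧ c0 < 1 ∧
      ∀ p ∈ K, c0 ≤ d (hmul n p.1 p.2) 0 := by
    rcases K.eq_empty_or_nonempty with hKe | hKne
    · exact ⟨1/2, by norm_num, by norm_num, by simp [hKe]⟩
    obtain ⟨p, hpK, hpmin⟩ := hKcomp.exists_isMinOn hKne
      ((hNcont.comp (hmul_cont n)).continuousOn)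
    have hfp : 0 < d (hmul n p.1 p.2) 0 := by
      rcases (hNnonneg (hmul n p.1 p.2) 0).lt_or_eq with h | h
      · exact h
      exfalso
      have hz : hmul n p.1 p.2 = 0 := (hd.eq_zero_iff _ 0).1 h.symm
      have hz2 : hmul n p.1 p.2 = hmul n p.1 (-p.1) := by
        rw [hz, hmul_neg_right]
      have hp2 : p.2 = -p.1 := hmul_left_cancel n hz2
      have hp1V : p.1 ∈ V := by
        have : -p.2 ∈ V := hV.1.neg_mem p.2 hpK.2.1
        rwa [hp2, neg_neg] at this
      have hp10 : p.1 = 0 := by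
        have : p.1 ∈ W ∩ V := ⟨hpK.1, hp1V⟩
        rw [hWV.2] at this
        exact this
      have hp20 : p.2 = 0 := by rw [hp2, hp10, neg_zero]
      have := hpK.2.2
      rw [hp10, hp20, (hd.eq_zero_iff 0 0).2 rfl] at this
      norm_num at this
    refine ⟨min (1/2) (d (hmul n p.1 p.2) 0), lt_min (by norm_num) hfp,
      (min_le_left _ _).trans_lt (by norm_num), fun q hq => ?_⟩
    exact (min_le_right _ _).trans (isMinOn_iff.1 hpmin _ hq)
  -- conclusion
  refine ⟨c0, hc0, hc01, fun w hw v hv => ?_⟩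
  refine ⟨?_, hupper w v⟩
  rcases (add_nonneg (hNnonneg w 0) (hNnonneg v 0)).lt_or_eq with hs | hs
  · -- positive case: rescale into K
    set s : ℝ := d w 0 + d v 0 with hsdef
    have hsinv : (0:ℝ) < s⁻¹ := inv_pos.2 hs
    have hw' : hdil n s⁻¹ w ∈ W := hW.1.dil_mem s⁻¹ hsinv w hw
    have hv' : hdil n s⁻¹ v ∈ V := hV.1.dil_mem s⁻¹ hsinv v hv
    have hsum : d (hdil n s⁻¹ w) 0 + d (hdil n s⁻¹ v) 0 = 1 := by
      rw [hNdil s⁻¹ hsinv w, hNdil s⁻¹ hsinv v, ← mul_add, ← hsdef,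
        inv_mul_cancel₀ hs.ne']
    have hK' : ((hdil n s⁻¹ w, hdil n s⁻¹ v) :
        (Fin (2*n+1) → ℝ) × (Fin (2*n+1) → ℝ)) ∈ K := ⟨hw', hv', hsum⟩
    have hle := hc0K _ hK'
    simp only at hle
    rw [← hdil_hmul, hNdil s⁻¹ hsinv] at hle
    have : c0 ≤ d (hmul n w v) 0 / s := by
      rwa [div_eq_inv_mul]
    calc c0 * (d w 0 + d v 0) = c0 * s := by rw [hsdef]
      _ ≤ d (hmul n w v) 0 := (le_div_iff₀ hs).1 this
  · -- degenerate case: both norms vanish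
    have hw0 : d w 0 = 0 := by
      have h1 := hNnonneg w 0; have h2 := hNnonneg v 0; linarith
    have hv0 : d v 0 = 0 := by
      have h1 := hNnonneg w 0; have h2 := hNnonneg v 0; linarith
    have hwz : w = 0 := (hd.eq_zero_iff w 0).1 hw0
    have hvz : v = 0 := (hd.eq_zero_iff v 0).1 hv0
    rw [hwz, hvz, hmul_zero_right, hw0, hv0, hwz] at *
    simp [(hd.eq_zero_iff (0 : Fin (2*n+1) → ℝ) 0).2 rfl]
end
end

section
/- Every homogeneous subgroup of the Heisenberg group H^n is either horizontal (contained in H_1) or vertical (contains H_2). -/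
noncomputable section

open Filter Set
open scoped BigOperators Topology ENNReal

/-!
If `x ∈ S` has nonzero vertical coordinate `a`, then `δ₂ x · x⁻¹ · x⁻¹` is the central element
with vertical coordinate `2a`. Indeed all factors have horizontal parts parallel to that of `x`,
so the symplectic term of each product vanishes (the points `(α x_h, β a)` multiply by adding
`(α, β)`), and only the quadratic scaling `a ↦ 4a` of the dilation survives. Dilations and
inverses of this central element fill the whole center `H_2`.
-/

namespace Heisenberg

variable {n : ℕ}

def scaleLayers (x : Fin (2*n+1) → ℝ) (α β : ℝ) : Fin (2*n+1) → ℝ :=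
  fun j => if (j : ℕ) = 2*n then β * x j else α * x j

theorem hmul_scaleLayers (x : Fin (2*n+1) → ℝ) (α β γ δ : ℝ) :
    hmul n (scaleLayers x α β) (scaleLayers x γ δ) = scaleLayers x (α + γ) (β + δ) := by
  funext j
  have hsymp : ∀ i : Fin n,
      scaleLayers x α β ⟨i, by omega⟩ * scaleLayers x γ δ ⟨i + n, by omega⟩
        - scaleLayers x α β ⟨i + n, by omega⟩ * scaleLayers x γ δ ⟨i, by omega⟩ = 0 := by
    intro i
    have h₁ : (i : ℕ) ≠ 2*n := by omega
    have h₂ : (i : ℕ) + n ≠ 2*n := by omega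
    simp only [scaleLayers, h₁, h₂, if_false]
    ring
  simp only [hmul, hsymp, Finset.sum_const_zero, zero_div, ite_self, add_zero]
  simp only [scaleLayers]
  split_ifs <;> ring

theorem hdil_scaleLayers (t : ℝ) (x : Fin (2*n+1) → ℝ) (α β : ℝ) :
    hdil n t (scaleLayers x α β) = scaleLayers x (t * α) (t ^ 2 * β) := by
  funext j
  simp only [hdil, scaleLayers]
  split_ifs <;> ring

theorem neg_scaleLayers (x : Fin (2*n+1) → ℝ) (α β : ℝ) :
    -scaleLayers x α β = scaleLayers x (-α) (-β) := by
  funext j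
  simp only [Pi.neg_apply, scaleLayers]
  split_ifs <;> ring

theorem scaleLayers_one_one (x : Fin (2*n+1) → ℝ) : scaleLayers x 1 1 = x := by
  funext j
  simp [scaleLayers]

theorem scaleLayers_zero_zero (x : Fin (2*n+1) → ℝ) : scaleLayers x 0 0 = 0 := by
  funext j
  simp [scaleLayers]

theorem eq_scaleLayers_of_mem_H2set {x y : Fin (2*n+1) → ℝ} (hx : x ∉ H1set n)
    (hy : y ∈ H2set n) : y = scaleLayers x 0 (y (Fin.last _) / x (Fin.last _)) := by
  funext j
  simp only [scaleLayers]
  split_ifs with hj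
  · obtain rfl : j = Fin.last _ := Fin.ext hj
    exact (div_mul_cancel₀ _ hx).symm
  · rw [zero_mul, hy j hj]

end Heisenberg

namespace IsHomSubgroup

open Heisenberg

variable {n : ℕ} {S : Set (Fin (2*n+1) → ℝ)}

theorem scaleLayers_zero_two_mem (hS : IsHomSubgroup n S) {x : Fin (2*n+1) → ℝ}
    (hx : x ∈ S) : scaleLayers x 0 2 ∈ S := by
  have hneg := hS.neg_mem x hx
  have h := hS.mul_mem _ (hS.mul_mem _ (hS.dil_mem 2 two_pos x hx) _ hneg) _ hneg
  rw [← scaleLayers_one_one x, hdil_scaleLayers, neg_scaleLayers, hmul_scaleLayers,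
    hmul_scaleLayers] at h
  convert h using 2 <;> norm_num

theorem scaleLayers_zero_mem (hS : IsHomSubgroup n S) {x : Fin (2*n+1) → ℝ}
    (hx : x ∈ S) (β : ℝ) : scaleLayers x 0 β ∈ S := by
  have hpos : ∀ β > 0, scaleLayers x 0 β ∈ S := by
    intro β hβ
    have := hS.dil_mem _ (Real.sqrt_pos.mpr (half_pos hβ)) _ (hS.scaleLayers_zero_two_mem hx)
    rwa [hdil_scaleLayers, mul_zero, Real.sq_sqrt (half_pos hβ).le, div_mul_cancel₀ _ two_ne_zero]
      at this
  rcases lt_trichotomy β 0 with hβ | rfl | hβ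
  · simpa only [neg_scaleLayers, neg_zero, neg_neg] using hS.neg_mem _ (hpos (-β) (neg_pos.mpr hβ))
  · exact scaleLayers_zero_zero x ▸ hS.zero_mem
  · exact hpos β hβ

end IsHomSubgroup

open Heisenberg in
/-- Every homogeneous subgroup of the Heisenberg group `H^n` is either horizontal
(contained in `H_1`) or vertical (contains `H_2`). -/
theorem stmt_6 (n : ℕ) (S : Set (Fin (2*n+1) → ℝ)) (hS : IsHomSubgroup n S) :
    S ⊆ H1set n ∨ H2set n ⊆ S := by
  refine or_iff_not_imp_left.mpr fun hS₁ => ?_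
  obtain ⟨x, hxS, hx⟩ := not_subset.mp hS₁
  intro y hy
  rw [eq_scaleLayers_of_mem_H2set hx hy]
  exact hS.scaleLayers_zero_mem hxS _
end
end

section
/- If W and V are homogeneous subgroups of H^n with H^n = WV and W ∩ V = {0}, then one of them is vertical (contains H_2) and the other is horizontal (contained in H_1). -/
noncomputable section

open Filter Set
open scoped BigOperators Topology ENNReal

/-!
A homogeneous subgroup containing a point `x` off `H₁` contains `δ₂ x · x⁻¹ · x⁻¹`, the central
element with last coordinate `2 x_{2n}`, and hence, by dilations and inversion, the whole centre
`H₂`. So each factor is vertical or horizontal. Two vertical factors would share the centre, and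
two horizontal ones cannot produce a nonzero central element: `w v ∈ H₂` with `w, v ∈ H₁` forces
`v = w⁻¹`.
-/

def bform (n : ℕ) (x y : Fin (2*n+1) → ℝ) : ℝ :=
  ∑ i : Fin n, (x ⟨(i:ℕ), by omega⟩ * y ⟨(i:ℕ)+n, by omega⟩
      - x ⟨(i:ℕ)+n, by omega⟩ * y ⟨(i:ℕ), by omega⟩)

lemma hmul_apply (n : ℕ) (x y : Fin (2*n+1) → ℝ) (j : Fin (2*n+1)) :
    hmul n x y j = x j + y j + (if (j : ℕ) = 2*n then bform n x y / 2 else 0) := rfl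

lemma hmul_eq_add_of_bform_eq_zero {n : ℕ} {x y : Fin (2*n+1) → ℝ} (h : bform n x y = 0) :
    hmul n x y = x + y := by
  funext j
  simp [hmul_apply, h]

lemma bform_eq_zero_of_proportional {n : ℕ} {x y z : Fin (2*n+1) → ℝ} {a b : ℝ}
    (hx : ∀ j : Fin (2*n+1), (j:ℕ) ≠ 2*n → x j = a * z j)
    (hy : ∀ j : Fin (2*n+1), (j:ℕ) ≠ 2*n → y j = b * z j) :
    bform n x y = 0 := by
  refine Finset.sum_eq_zero fun i _ => ?_
  have hi := i.isLt
  rw [hx _ (by simp only; omega), hx _ (by simp only; omega),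
    hy _ (by simp only; omega), hy _ (by simp only; omega)]
  ring

lemma hdil_apply_of_ne {n : ℕ} (t : ℝ) (x : Fin (2*n+1) → ℝ) {j : Fin (2*n+1)}
    (hj : (j:ℕ) ≠ 2*n) : hdil n t x j = t * x j :=
  if_neg hj

lemma hdil_apply_last (n : ℕ) (t : ℝ) (x : Fin (2*n+1) → ℝ) :
    hdil n t x (Fin.last (2*n)) = t ^ 2 * x (Fin.last (2*n)) :=
  if_pos rfl

lemma hdil_mem_H2set {n : ℕ} (t : ℝ) {x : Fin (2*n+1) → ℝ} (hx : x ∈ H2set n) :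
    hdil n t x ∈ H2set n := fun j hj => by
  rw [hdil_apply_of_ne t x hj, hx j hj, mul_zero]

lemma eq_of_mem_H2set {n : ℕ} {x y : Fin (2*n+1) → ℝ} (hx : x ∈ H2set n) (hy : y ∈ H2set n)
    (h : x (Fin.last (2*n)) = y (Fin.last (2*n))) : x = y := by
  funext j
  by_cases hj : (j:ℕ) = 2*n
  · rwa [show j = Fin.last (2*n) from Fin.ext hj]
  · rw [hx j hj, hy j hj]

lemma hdil_two_sub_two_smul_mem_H2set {n : ℕ} (x : Fin (2*n+1) → ℝ) :
    hdil n 2 x - 2 • x ∈ H2set n := fun j hj => by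
  simp [hdil_apply_of_ne 2 x hj, two_smul, two_mul]

lemma hdil_two_sub_two_smul_apply_last (n : ℕ) (x : Fin (2*n+1) → ℝ) :
    (hdil n 2 x - 2 • x) (Fin.last (2*n)) = 2 * x (Fin.last (2*n)) := by
  simp only [Pi.sub_apply, Pi.smul_apply, hdil_apply_last]
  ring

lemma hmul_eq_zero_of_mem_H2set {n : ℕ} {w v : Fin (2*n+1) → ℝ} (hw : w ∈ H1set n)
    (hv : v ∈ H1set n) (h : hmul n w v ∈ H2set n) : hmul n w v = 0 := by
  have hvw : ∀ j : Fin (2*n+1), (j:ℕ) ≠ 2*n → v j = -1 * w j := fun j hj => by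
    have := h j hj
    rw [hmul_apply, if_neg hj] at this
    linarith
  have hsum : hmul n w v = w + v :=
    hmul_eq_add_of_bform_eq_zero
      (bform_eq_zero_of_proportional (a := 1) (fun _ _ => (one_mul _).symm) hvw)
  refine eq_of_mem_H2set h (fun _ _ => rfl) ?_
  rw [hsum, Pi.add_apply, show w (Fin.last (2*n)) = 0 from hw, show v (Fin.last (2*n)) = 0 from hv,
    add_zero, Pi.zero_apply]

namespace IsHomSubgroup

variable {n : ℕ} {S : Set (Fin (2*n+1) → ℝ)}

/-- The horizontal parts of `δ₂ x`, `δ₂ x · x⁻¹` and `x⁻¹` are multiples of that of `x`, so in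
`δ₂ x · x⁻¹ · x⁻¹` both products are plain sums. -/
lemma hdil_two_sub_two_smul_mem (hS : IsHomSubgroup n S) {x : Fin (2*n+1) → ℝ} (hx : x ∈ S) :
    hdil n 2 x - 2 • x ∈ S := by
  have hneg : ∀ j : Fin (2*n+1), (j:ℕ) ≠ 2*n → (-x) j = -1 * x j := fun j _ => by simp
  have h₁ : hmul n (hdil n 2 x) (-x) = hdil n 2 x - x := by
    rw [hmul_eq_add_of_bform_eq_zero
      (bform_eq_zero_of_proportional (fun j hj => hdil_apply_of_ne 2 x hj) hneg), sub_eq_add_neg]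
  have h₂ : hmul n (hdil n 2 x - x) (-x) = hdil n 2 x - 2 • x := by
    have hhor : ∀ j : Fin (2*n+1), (j:ℕ) ≠ 2*n → (hdil n 2 x - x) j = 1 * x j := fun j hj => by
      simp only [Pi.sub_apply, hdil_apply_of_ne 2 x hj]
      ring
    rw [hmul_eq_add_of_bform_eq_zero (bform_eq_zero_of_proportional hhor hneg), two_smul]
    abel
  have := hS.mul_mem _ (hS.mul_mem _ (hS.dil_mem 2 two_pos x hx) _ (hS.neg_mem x hx)) _
    (hS.neg_mem x hx)
  rwa [h₁, h₂] at this

lemma mem_of_mem_H2set_of_div_pos (hS : IsHomSubgroup n S) {z w : Fin (2*n+1) → ℝ}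
    (hzS : z ∈ S) (hz : z ∈ H2set n) (hw : w ∈ H2set n)
    (hwz : 0 < w (Fin.last (2*n)) / z (Fin.last (2*n))) : w ∈ S := by
  have hz0 : z (Fin.last (2*n)) ≠ 0 := fun h => by simp [h] at hwz
  have hsqrt := Real.sqrt_pos.2 hwz
  convert hS.dil_mem _ hsqrt z hzS using 1
  refine eq_of_mem_H2set hw (hdil_mem_H2set _ hz) ?_
  rw [hdil_apply_last, Real.sq_sqrt hwz.le, div_mul_cancel₀ _ hz0]

lemma H2set_subset_of_mem (hS : IsHomSubgroup n S) {z : Fin (2*n+1) → ℝ} (hzS : z ∈ S)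
    (hz : z ∈ H2set n) (hz0 : z (Fin.last (2*n)) ≠ 0) : H2set n ⊆ S := by
  intro w hw
  rcases eq_or_ne (w (Fin.last (2*n))) 0 with hw0 | hw0
  · rw [eq_of_mem_H2set hw (fun _ _ => rfl) hw0]
    exact hS.zero_mem
  rcases (div_ne_zero hw0 hz0).lt_or_gt with hneg | hpos
  · refine hS.mem_of_mem_H2set_of_div_pos (hS.neg_mem z hzS) (fun j hj => ?_) hw ?_
    · simp [hz j hj]
    · rw [Pi.neg_apply, div_neg]
      exact neg_pos.2 hneg
  · exact hS.mem_of_mem_H2set_of_div_pos hzS hz hw hpos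

lemma H2set_subset_or_subset_H1set (hS : IsHomSubgroup n S) :
    H2set n ⊆ S ∨ S ⊆ H1set n := by
  refine or_iff_not_imp_right.2 fun hS₁ => ?_
  obtain ⟨x, hxS, hx⟩ := Set.not_subset.1 hS₁
  refine hS.H2set_subset_of_mem (hS.hdil_two_sub_two_smul_mem hxS)
    (hdil_two_sub_two_smul_mem_H2set x) ?_
  rw [hdil_two_sub_two_smul_apply_last]
  exact mul_ne_zero two_ne_zero hx

end IsHomSubgroup

/-- If `W` and `V` are homogeneous subgroups of `H^n` with `H^n = WV` and `W ∩ V = {0}`,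
then one of them is vertical (contains `H_2`) and the other is horizontal
(contained in `H_1`). -/
theorem stmt_8 (n : ℕ) (W V : Set (Fin (2*n+1) → ℝ))
    (hW : IsHomSubgroup n W) (hV : IsHomSubgroup n V)
    (hWV : ∀ x, ∃ w ∈ W, ∃ v ∈ V, x = hmul n w v) (hcap : W ∩ V = {0}) :
    (H2set n ⊆ W ∧ V ⊆ H1set n) ∨ (H2set n ⊆ V ∧ W ⊆ H1set n) := by
  set e : Fin (2*n+1) → ℝ := Pi.single (Fin.last (2*n)) 1
  have he : e ∈ H2set n := fun j hj => Pi.single_eq_of_ne (fun h => hj (by simp [h])) _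
  have he0 : e ≠ 0 := by simp [e]
  rcases hW.H2set_subset_or_subset_H1set with hW₂ | hW₁ <;>
    rcases hV.H2set_subset_or_subset_H1set with hV₂ | hV₁
  · have : e ∈ W ∩ V := ⟨hW₂ he, hV₂ he⟩
    exact absurd (by rwa [hcap] at this) he0
  · exact .inl ⟨hW₂, hV₁⟩
  · exact .inr ⟨hV₂, hW₁⟩
  · obtain ⟨w, hw, v, hv, hwv⟩ := hWV e
    rw [hwv] at he he0
    exact absurd (hmul_eq_zero_of_mem_H2set (hW₁ hw) (hV₁ hv) he) he0
end
end
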